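/- Let X = ({0} × [0,1]) ∪ ([0,1] × {0}) ⊂ ℝ², equipped with the metric obtained by restricting the ℓ_∞ norm of ℝ². Then neither the uncentered blossom Blu((1,0), 1, 1/6) nor the blossom Bl((1,0), 1, 1/6) is an open ball of X: for every x ∈ X and every r > 0, B(x,r) ≠ Blu((1,0), 1, 1/6) and B(x,r) ≠ Bl((1,0), 1, 1/6). -/

import Mathlib

/-!
Both blossoms contain `(1,0)` and `(0,0)` (the latter through the centre `(1/12,0)`), and
`Bl ⊆ Blu`, yet `Blu` misses `(0,1/3)`: every point of `B((1,0),1)` lies on the horizontal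
arm, so a `1/6`-ball meeting it has its centre at height `< 1/6`, whereas a `1/6`-ball
containing `(0,1/3)` has its centre at height `> 1/6`. On the other hand a ball `B(x,r)`
containing `(1,0)` and `(0,0)` has `r > 1/2`, and since `d((0,t),x) ≤ max(d((0,0),x), t)`
for every `x` in the cross, it contains the vertical arm up to height `1/2`.
-/

open Metric

/-- The `s`-blossom of a set `S`: `Bl(S,s) = ⋃_{x ∈ S} B(x,s)`. -/
def Bl {X : Type*} [PseudoMetricSpace X] (S : Set X) (s : ℝ) : Set X :=
  ⋃ x ∈ S, ball x s

/-- The uncentered `s`-blossom of a set `S`. -/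
def Blu {X : Type*} [PseudoMetricSpace X] (S : Set X) (s : ℝ) : Set X :=
  ⋃ x ∈ S, ⋃ y ∈ {y : X | x ∈ ball y s}, ball y s

/-- The cross `({0} × [0,1]) ∪ ([0,1] × {0}) ⊆ ℝ²`, where `ℝ² = ℝ × ℝ` carries
the `ℓ_∞` (sup) metric `d(u,v) = max(|u₁ − v₁|, |u₂ − v₂|)`, which is the
product metric of `ℝ × ℝ`. -/
abbrev Cross : Type :=
  {p : ℝ × ℝ // p ∈ ({0} ×ˢ Set.Icc (0:ℝ) 1) ∪ (Set.Icc (0:ℝ) 1 ×ˢ {0})}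

/-- The point `(1,0)` of the cross. -/
def crossPt : Cross :=
  ⟨(1, 0), Or.inr (Set.mk_mem_prod (by norm_num) rfl)⟩

lemma Bl_subset_Blu {X : Type*} [PseudoMetricSpace X] (S : Set X) (s : ℝ) :
    Bl S s ⊆ Blu S s := by
  intro z hz
  obtain ⟨x, hx, hzx⟩ := Set.mem_iUnion₂.1 hz
  have hs : 0 < s := pos_of_mem_ball hzx
  exact Set.mem_iUnion₂.2 ⟨x, hx, Set.mem_iUnion₂.2 ⟨x, mem_ball_self hs, hzx⟩⟩

namespace Cross

def vert (t : ℝ) (ht : t ∈ Set.Icc (0 : ℝ) 1) : Cross :=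
  ⟨(0, t), Or.inl (Set.mk_mem_prod rfl ht)⟩

def horiz (t : ℝ) (ht : t ∈ Set.Icc (0 : ℝ) 1) : Cross :=
  ⟨(t, 0), Or.inr (Set.mk_mem_prod ht rfl)⟩

def origin : Cross := horiz 0 (by norm_num)

lemma dist_eq (p q : Cross) :
    dist p q = max |p.1.1 - q.1.1| |p.1.2 - q.1.2| := by
  simp only [Subtype.dist_eq, Prod.dist_eq, Real.dist_eq]

lemma coord_cases (p : Cross) :
    (p.1.1 = 0 ∧ 0 ≤ p.1.2) ∨ (0 ≤ p.1.1 ∧ p.1.2 = 0) := by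
  rcases p.2 with ⟨h1, h2, -⟩ | ⟨⟨h1, -⟩, h2⟩
  · exact Or.inl ⟨h1, h2⟩
  · exact Or.inr ⟨h1, h2⟩

lemma dist_vert_le (t : ℝ) (ht : t ∈ Set.Icc (0 : ℝ) 1) (x : Cross) :
    dist (vert t ht) x ≤ max (dist origin x) t := by
  simp only [dist_eq, vert, origin, horiz]
  rcases coord_cases x with ⟨h1, h2⟩ | ⟨h1, h2⟩
  · simp only [h1, sub_zero, zero_sub, abs_neg, abs_zero, abs_of_nonneg h2]
    grind
  · simp only [h2, sub_zero, zero_sub, abs_neg, abs_zero, abs_of_nonneg h1, abs_of_nonneg ht.1]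
    grind

lemma dist_crossPt_origin : dist crossPt origin = 1 := by
  simp [dist_eq, crossPt, origin, horiz]

lemma vert_mem_ball {x : Cross} {r : ℝ} (hc : crossPt ∈ ball x r) (ho : origin ∈ ball x r)
    (t : ℝ) (ht : t ∈ Set.Icc (0 : ℝ) 1) (ht2 : t ≤ 1 / 2) : vert t ht ∈ ball x r := by
  rw [mem_ball] at hc ho ⊢
  have hr : 1 < 2 * r := by
    linarith [dist_crossPt_origin ▸ dist_triangle_right crossPt origin x]
  exact (dist_vert_le t ht x).trans_lt (max_lt ho (by linarith))

lemma snd_eq_zero_of_mem_ball_crossPt {w : Cross} (hw : w ∈ ball crossPt 1) : w.1.2 = 0 := by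
  rw [mem_ball, dist_eq] at hw
  rcases coord_cases w with ⟨h1, -⟩ | ⟨-, h2⟩
  · simp [h1, crossPt] at hw
  · exact h2

lemma crossPt_mem_Bl : crossPt ∈ Bl (ball crossPt 1) (1 / 6) :=
  Set.mem_iUnion₂.2 ⟨crossPt, mem_ball_self one_pos, mem_ball_self (by norm_num)⟩

lemma origin_mem_Bl : origin ∈ Bl (ball crossPt 1) (1 / 6) := by
  refine Set.mem_iUnion₂.2 ⟨horiz (1 / 12) (by norm_num), ?_, ?_⟩ <;>
    norm_num [mem_ball, dist_eq, crossPt, origin, horiz, abs_of_nonneg]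

lemma vert_notMem_Blu (t : ℝ) (ht : t ∈ Set.Icc (0 : ℝ) 1) (ht3 : 1 / 3 ≤ t) :
    vert t ht ∉ Blu (ball crossPt 1) (1 / 6) := by
  intro h
  obtain ⟨w, hw, hy⟩ := Set.mem_iUnion₂.1 h
  obtain ⟨y, hwy, hty⟩ := Set.mem_iUnion₂.1 hy
  rw [Set.mem_ofPred_eq, mem_ball, dist_eq, snd_eq_zero_of_mem_ball_crossPt hw] at hwy
  rw [mem_ball, dist_eq] at hty
  have h₁ := (le_max_right _ _).trans_lt hwy
  have h₂ := (le_max_right _ _).trans_lt hty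
  simp only [vert, abs_lt] at h₁ h₂
  linarith [h₁.1, h₂.1]

lemma ball_ne_of_vert_notMem {A : Set Cross} (hc : crossPt ∈ A) (ho : origin ∈ A)
    (t : ℝ) (ht : t ∈ Set.Icc (0 : ℝ) 1) (ht2 : t ≤ 1 / 2) (hv : vert t ht ∉ A)
    (x : Cross) (r : ℝ) : ball x r ≠ A := by
  rintro rfl
  exact hv (vert_mem_ball hc ho t ht ht2)

end Cross

/-- In the cross `X = ({0} × [0,1]) ∪ ([0,1] × {0})` with the restricted
`ℓ_∞` metric, neither `Blu((1,0), 1, 1/6)` nor `Bl((1,0), 1, 1/6)` is an open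
ball of `X`. -/
theorem cross_blossoms_not_balls :
    ∀ (x : Cross) (r : ℝ), 0 < r →
      ball x r ≠ Blu (ball crossPt 1) (1 / 6) ∧
      ball x r ≠ Bl (ball crossPt 1) (1 / 6) := by
  intro x r _
  have ht : (1 / 3 : ℝ) ∈ Set.Icc 0 1 := by norm_num
  have hBl := Bl_subset_Blu (ball crossPt 1) (1 / 6)
  have hBlu := Cross.vert_notMem_Blu (1 / 3) ht le_rfl
  exact ⟨Cross.ball_ne_of_vert_notMem (hBl Cross.crossPt_mem_Bl) (hBl Cross.origin_mem_Bl)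
      (1 / 3) ht (by norm_num) hBlu x r,
    Cross.ball_ne_of_vert_notMem Cross.crossPt_mem_Bl Cross.origin_mem_Bl
      (1 / 3) ht (by norm_num) (fun h => hBlu (hBl h)) x r⟩
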